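/- (Tikhonov regularization converges to the constrained problem as λ → 0.) Let J : ℝ^N → ℝ be a finite-valued convex function, Φ : ℝ^N → ℝ^P linear, and y ∈ Im(Φ). Let (λ_n) be a sequence of positive reals with λ_n → 0, and for each n let x_n be a minimizer of x ↦ (1/(2λ_n))‖Φx − y‖² + J(x). If x_n converges to some x̄ ∈ ℝ^N, then Φx̄ = y and x̄ minimizes J over {x ∈ ℝ^N : Φx = y}. -/

import Mathlib

/-
Put `F(x) = ½‖Φx − y‖²`, so that `xₙ` minimizes `F/λₙ + J`. Comparing `xₙ` with a point `x₀`
satisfying `Φx₀ = y` gives `F(xₙ) ≤ λₙ (J(x₀) − J(xₙ))`; a finite convex function on `ℝ^N` is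
continuous, so `J(xₙ) → J(x̄)` and the right side tends to `0`, whence `F(x̄) = 0`. Comparing
with an arbitrary feasible `x` instead gives `J(xₙ) ≤ J(x)`, which passes to the limit.
-/

open Matrix

/-- Euclidean dot product on `ℝ^n`. -/
noncomputable def dotp {n : ℕ} (u v : Fin n → ℝ) : ℝ := ∑ i, u i * v i

/-- Euclidean (ℓ²) norm on `ℝ^n`. -/
noncomputable def nrm2 {n : ℕ} (u : Fin n → ℝ) : ℝ := Real.sqrt (∑ i, (u i) ^ 2)

/-- ℓ¹ norm on `ℝ^n`. -/
noncomputable def l1norm {n : ℕ} (u : Fin n → ℝ) : ℝ := ∑ i, |u i|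

/-- ℓ^∞ norm of a finitely indexed real vector. -/
noncomputable def linf {ι : Type*} [Fintype ι] (u : ι → ℝ) : ℝ := ⨆ i, |u i|

/-- The sign function: 1 for positive, -1 for negative, 0 at 0. -/
noncomputable def sgn (t : ℝ) : ℝ := if 0 < t then 1 else if t < 0 then -1 else 0

/-- Subdifferential of a finite-valued function `J : ℝ^n → ℝ` at `x`:
`∂J(x) = {η : J(x+δ) ≥ J(x) + ⟨η,δ⟩ for all δ}`. -/
def subdiff {n : ℕ} (J : (Fin n → ℝ) → ℝ) (x : Fin n → ℝ) : Set (Fin n → ℝ) :=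
  {η | ∀ δ, J x + dotp η δ ≤ J (x + δ)}

/-- The model tangent subspace `T_x = Lin(∂J(x))^⊥`, where `Lin(E)` is the linear
space parallel to the affine hull of `E`. -/
def modelT {n : ℕ} (J : (Fin n → ℝ) → ℝ) (x : Fin n → ℝ) : Set (Fin n → ℝ) :=
  {u | ∀ v ∈ (affineSpan ℝ (subdiff J x)).direction, dotp u v = 0}

open Filter Topology

section PenaltyMethod

variable {X : Type*} {F J : X → ℝ} {lam : ℕ → ℝ} {xseq : ℕ → X}

theorem penalty_le_mul_sub (hpos : ∀ n, 0 < lam n)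
    (hmin : ∀ n x, (lam n)⁻¹ * F (xseq n) + J (xseq n) ≤ (lam n)⁻¹ * F x + J x)
    {x₀ : X} (hx₀ : F x₀ = 0) (n : ℕ) :
    F (xseq n) ≤ lam n * (J x₀ - J (xseq n)) := by
  have h := hmin n x₀
  rw [hx₀, mul_zero, zero_add] at h
  rw [← inv_mul_le_iff₀ (hpos n)]
  linarith

theorem tendsto_penalty_zero (hF₀ : ∀ x, 0 ≤ F x) (hpos : ∀ n, 0 < lam n)
    (hlim : Tendsto lam atTop (𝓝 0))
    (hmin : ∀ n x, (lam n)⁻¹ * F (xseq n) + J (xseq n) ≤ (lam n)⁻¹ * F x + J x)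
    (hfeas : ∃ x, F x = 0) {c : ℝ} (hJ : Tendsto (fun n ↦ J (xseq n)) atTop (𝓝 c)) :
    Tendsto (fun n ↦ F (xseq n)) atTop (𝓝 0) := by
  obtain ⟨x₀, hx₀⟩ := hfeas
  have hbound : Tendsto (fun n ↦ lam n * (J x₀ - J (xseq n))) atTop (𝓝 0) := by
    simpa using hlim.mul (hJ.const_sub (J x₀))
  exact squeeze_zero (fun n ↦ hF₀ _) (penalty_le_mul_sub hpos hmin hx₀) hbound

theorem limit_of_penalized_minimizers [TopologicalSpace X] {xbar : X}
    (hF : ContinuousAt F xbar) (hJ : ContinuousAt J xbar) (hF₀ : ∀ x, 0 ≤ F x)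
    (hpos : ∀ n, 0 < lam n) (hlim : Tendsto lam atTop (𝓝 0))
    (hmin : ∀ n x, (lam n)⁻¹ * F (xseq n) + J (xseq n) ≤ (lam n)⁻¹ * F x + J x)
    (hfeas : ∃ x, F x = 0) (hconv : Tendsto xseq atTop (𝓝 xbar)) :
    F xbar = 0 ∧ ∀ x, F x = 0 → J xbar ≤ J x := by
  have hJlim : Tendsto (fun n ↦ J (xseq n)) atTop (𝓝 (J xbar)) := hJ.tendsto.comp hconv
  have hFlim := tendsto_penalty_zero hF₀ hpos hlim hmin hfeas hJlim
  refine ⟨tendsto_nhds_unique (hF.tendsto.comp hconv) hFlim, fun x hx ↦ ?_⟩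
  refine le_of_tendsto hJlim (Eventually.of_forall fun n ↦ ?_)
  have h := hmin n x
  rw [hx, mul_zero, zero_add] at h
  have hpen : 0 ≤ (lam n)⁻¹ * F (xseq n) := mul_nonneg (inv_nonneg.2 (hpos n).le) (hF₀ _)
  linarith

end PenaltyMethod

theorem nrm2_eq_norm {n : ℕ} (u : Fin n → ℝ) :
    nrm2 u = ‖(WithLp.toLp 2 u : EuclideanSpace ℝ (Fin n))‖ := by
  simp [nrm2, EuclideanSpace.norm_eq]

/-- Tikhonov regularization converges to the constrained problem
as `λ → 0`: if `y ∈ Im(Φ)`, `λ_n → 0`, `x_n` minimizes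
`(1/(2λ_n))‖Φx − y‖² + J(x)` and `x_n → x̄`, then `Φx̄ = y` and `x̄` minimizes
`J` over `{x : Φx = y}`. -/
theorem stmt18 {N P : ℕ} (J : (Fin N → ℝ) → ℝ) (hJ : ConvexOn ℝ Set.univ J)
    (Φ : Matrix (Fin P) (Fin N) ℝ) (y : Fin P → ℝ) (hy : ∃ x, Φ.mulVec x = y)
    (lam : ℕ → ℝ) (hpos : ∀ n, 0 < lam n)
    (hlim : Filter.Tendsto lam Filter.atTop (nhds 0))
    (xseq : ℕ → Fin N → ℝ)
    (hmin : ∀ n x, (1 / (2 * lam n)) * nrm2 (Φ.mulVec (xseq n) - y) ^ 2 + J (xseq n) ≤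
                   (1 / (2 * lam n)) * nrm2 (Φ.mulVec x - y) ^ 2 + J x)
    (xbar : Fin N → ℝ) (hconv : Filter.Tendsto xseq Filter.atTop (nhds xbar)) :
    Φ.mulVec xbar = y ∧ ∀ x, Φ.mulVec x = y → J xbar ≤ J x := by
  set F : (Fin N → ℝ) → ℝ := fun x ↦ nrm2 (Φ.mulVec x - y) ^ 2 / 2
  have hF_eq_zero (x : Fin N → ℝ) : F x = 0 ↔ Φ.mulVec x = y := by
    simp [F, nrm2_eq_norm, sub_eq_zero]
  have hF : Continuous F := by
    simp only [F, nrm2_eq_norm]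
    fun_prop
  have hJc : Continuous J := continuousOn_univ.1 (hJ.continuousOn isOpen_univ)
  have hmin' : ∀ n x, (lam n)⁻¹ * F (xseq n) + J (xseq n) ≤ (lam n)⁻¹ * F x + J x := by
    intro n x
    convert hmin n x using 2 <;> simp only [F] <;> ring
  simp only [← hF_eq_zero] at hy ⊢
  exact limit_of_penalized_minimizers hF.continuousAt hJc.continuousAt (fun x ↦ by positivity)
    hpos hlim hmin' hy hconv
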